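/- Stratification holds in ZF: every set is a subset of some level. -/

import Mathlib

def pot (a : ZFSet) : ZFSet :=
  ZFSet.sep (fun x => ∃ c ∈ a, x ⊆ c) (ZFSet.powerset (ZFSet.sUnion a))

def Potent (a : ZFSet) : Prop := ∀ x, (∃ c, x ⊆ c ∧ c ∈ a) → x ∈ a

def IsHistory (h : ZFSet) : Prop := ∀ x ∈ h, x = pot (x ∩ h)

def IsLevel (s : ZFSet) : Prop := ∃ h, IsHistory h ∧ s = pot h

/-!
Members of a history are transitive (by ∈-induction, since `pot` of a set of transitive sets is
transitive), hence so are levels, and every level `s` is `pot` of the levels in it. Consequently,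
for any transitive set `T` the levels in `T` form a history. Given a set `a`, ∈-induction provides
a level `g x ⊇ x` for each `x ∈ a`; the levels contained in some `g x` form a history `h`, and
`pot h` is a level containing every `x ∈ a`.
-/

open ZFSet

lemma mem_pot {a x : ZFSet} : x ∈ pot a ↔ ∃ c ∈ a, x ⊆ c := by
  simp only [pot, mem_sep, mem_powerset, and_iff_right_iff_imp]
  rintro ⟨c, hc, hxc⟩ z hz
  exact mem_sUnion.2 ⟨c, hc, hxc hz⟩

lemma subset_pot (a : ZFSet) : a ⊆ pot a := fun x hx => mem_pot.2 ⟨x, hx, subset_rfl⟩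

lemma potent_pot (a : ZFSet) : Potent (pot a) := by
  rintro x ⟨y, hxy, hy⟩
  obtain ⟨c, hc, hyc⟩ := mem_pot.1 hy
  exact mem_pot.2 ⟨c, hc, hxy.trans hyc⟩

lemma isTransitive_pot {a : ZFSet} (ha : ∀ c ∈ a, c.IsTransitive) : (pot a).IsTransitive := by
  intro z hz w hw
  obtain ⟨c, hc, hzc⟩ := mem_pot.1 hz
  exact mem_pot.2 ⟨c, hc, (ha c hc).subset_of_mem (hzc hw)⟩

lemma IsHistory.isTransitive_of_mem {h x : ZFSet} (hh : IsHistory h) (hx : x ∈ h) :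
    x.IsTransitive := by
  induction x using ZFSet.inductionOn with
  | _ x ih =>
    rw [hh x hx]
    exact isTransitive_pot fun c hc => ih c (mem_inter.1 hc).1 (mem_inter.1 hc).2

lemma IsHistory.isLevel_of_mem {h x : ZFSet} (hh : IsHistory h) (hx : x ∈ h) : IsLevel x := by
  refine ⟨x ∩ h, fun y hy => ?_, hh x hx⟩
  obtain ⟨hyx, hyh⟩ := mem_inter.1 hy
  have hyx' : y ⊆ x := (hh.isTransitive_of_mem hx).subset_of_mem hyx
  have : y ∩ (x ∩ h) = y ∩ h := by
    ext z
    simp only [mem_inter]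
    exact ⟨fun hz => ⟨hz.1, hz.2.2⟩, fun hz => ⟨hz.1, hyx' hz.1, hz.2⟩⟩
  rw [this]
  exact hh y hyh

lemma IsLevel.isTransitive {s : ZFSet} (hs : IsLevel s) : s.IsTransitive := by
  obtain ⟨h, hh, rfl⟩ := hs
  exact isTransitive_pot fun c hc => hh.isTransitive_of_mem hc

lemma IsLevel.eq_pot_sep_isLevel {s : ZFSet} (hs : IsLevel s) : s = pot (s.sep IsLevel) := by
  obtain ⟨h, hh, rfl⟩ := hs
  refine ZFSet.ext fun z => ⟨fun hz => ?_, fun hz => ?_⟩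
  · obtain ⟨c, hc, hzc⟩ := mem_pot.1 hz
    exact mem_pot.2 ⟨c, mem_sep.2 ⟨subset_pot h hc, hh.isLevel_of_mem hc⟩, hzc⟩
  · obtain ⟨c, hc, hzc⟩ := mem_pot.1 hz
    exact potent_pot h z ⟨c, hzc, (mem_sep.1 hc).1⟩

lemma IsTransitive.isHistory_sep_isLevel {T : ZFSet} (hT : T.IsTransitive) :
    IsHistory (T.sep IsLevel) := by
  intro x hx
  obtain ⟨hxT, hx⟩ := mem_sep.1 hx
  have : x ∩ T.sep IsLevel = x.sep IsLevel := by
    ext t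
    simp only [mem_inter, mem_sep]
    exact ⟨fun ht => ⟨ht.1, ht.2.2⟩, fun ht => ⟨ht.1, hT.subset_of_mem hxT ht.1, ht.2⟩⟩
  rw [this]
  exact hx.eq_pot_sep_isLevel

lemma exists_isLevel_subset {a : ZFSet} (ha : ∀ x ∈ a, ∃ s, IsLevel s ∧ x ⊆ s) :
    ∃ s, IsLevel s ∧ a ⊆ s := by
  choose! g hg using ha
  have : Definable₁ g := Classical.allZFSetDefinable _
  set h := (pot (image g a)).sep IsLevel
  have hh : IsHistory h := by
    refine IsTransitive.isHistory_sep_isLevel (isTransitive_pot fun c hc => ?_)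
    obtain ⟨x, hx, rfl⟩ := mem_image.1 hc
    exact (hg x hx).1.isTransitive
  refine ⟨pot h, ⟨h, hh, rfl⟩, fun x hx => mem_pot.2 ⟨g x, ?_, (hg x hx).2⟩⟩
  exact mem_sep.2 ⟨subset_pot _ (mem_image.2 ⟨x, hx, rfl⟩), (hg x hx).1⟩

theorem stmt8 (a : ZFSet) : ∃ s, IsLevel s ∧ a ⊆ s := by
  induction a using ZFSet.inductionOn with
  | _ a ih => exact exists_isLevel_subset ih
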